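/- In a medium, two states P and Q satisfy: their token contents have equal cardinality always, and their token contents are equal if and only if P = Q. -/

import Mathlib

variable {S : Type*}

/-- Result of applying message `m` (a list of tokens) to state `P`. -/
def mApply (m : List (S → S)) (P : S) : S := m.foldl (fun s τ => τ s) P

/-- `τ'` is a reverse of `τ`. -/
def IsReverse (τ τ' : S → S) : Prop := ∀ P Q : S, P ≠ Q → (τ P = Q ↔ τ' Q = P)

/-- `(S, T)` is a token system. -/
def IsTokenSystem (T : Set (S → S)) : Prop :=
  Nontrivial S ∧ T.Nonempty ∧ ∀ τ ∈ T, τ ≠ id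

/-- `m` is a message of the token system with token set `T`. -/
def IsMsg (T : Set (S → S)) (m : List (S → S)) : Prop := ∀ τ ∈ m, τ ∈ T

/-- `m` is stepwise effective for `P`. -/
def StepwiseEff : List (S → S) → S → Prop
  | [], _ => True
  | τ :: rest, P => τ P ≠ P ∧ StepwiseEff rest (τ P)

/-- `m` is consistent: it contains no token together with a reverse of it. -/
def Consistent (m : List (S → S)) : Prop :=
  ∀ τ ∈ m, ∀ τ' ∈ m, ¬ IsReverse τ τ'

/-- `m` is concise for `P`. -/
def Concise (T : Set (S → S)) (m : List (S → S)) (P : S) : Prop :=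
  IsMsg T m ∧ Consistent m ∧ StepwiseEff m P ∧ m.Nodup

/-- `m` is a return message for `P`. -/
def IsReturn (m : List (S → S)) (P : S) : Prop :=
  StepwiseEff m P ∧ mApply m P = P

/-- `m` is vacuous: its indices partition into pairs of mutually reverse tokens. -/
def Vacuous (m : List (S → S)) : Prop :=
  ∃ σ : Equiv.Perm (Fin m.length),
    (∀ i, σ i ≠ i) ∧ (∀ i, σ (σ i) = i) ∧
    ∀ i, IsReverse (m.get i) (m.get (σ i))

/-- `(S, T)` is a medium: token system satisfying [Ma] and [Mb]. -/
def IsMedium (T : Set (S → S)) : Prop :=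
  IsTokenSystem T ∧
  (∀ P Q : S, P ≠ Q → ∃ m, Concise T m P ∧ mApply m P = Q) ∧
  (∀ (m : List (S → S)) (P : S), IsMsg T m → IsReturn m P → Vacuous m)

/-- Content of a message: its set of tokens. -/
def msgContent (m : List (S → S)) : Set (S → S) := {τ | τ ∈ m}

/-- Token content of a state `P`. -/
def SContent (T : Set (S → S)) (P : S) : Set (S → S) :=
  {τ | ∃ (V : S) (m : List (S → S)), Concise T m V ∧ mApply m V = P ∧ τ ∈ m}

/-- `mr` is the reverse message `τ̃ₙ…τ̃₁` of `m = τ₁…τₙ`. -/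
def IsReverseOfMsg (m mr : List (S → S)) : Prop :=
  List.Forall₂ (fun τ τ' => IsReverse τ τ' ∧ IsReverse τ' τ) m mr.reverse

/-!
Every token `τ` of a medium has a unique reverse `τ̃`, and the content of every state contains
exactly one token of each pair `{τ, τ̃}`. At least one: prefix `τ` to a concise message reaching
the state; if neither `τ` nor `τ̃` occurs in that message, the result is still concise. At most
one: if concise messages `n` and `p` reach `X`, with `τ ∈ n` and `τ̃ ∈ p`, then `n`, the reverse
of `p` and a concise message closing the loop form a return message in which `τ` occurs at least
twice and `τ̃` at most once, which is not vacuous. Swapping `τ ↔ τ̃` therefore matches up any two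
contents, and the first token of a concise message from `P` to `Q` lies in the content of `Q`
while its reverse lies in the content of `P`.
-/

open Cardinal

namespace IsReverse

variable {τ τ' τ₁ τ₂ : S → S}

theorem symm (h : IsReverse τ τ') : IsReverse τ' τ :=
  fun P Q hPQ => (h Q P hPQ.symm).symm

theorem apply_apply (h : IsReverse τ τ') {P : S} (hP : τ P ≠ P) : τ' (τ P) = P :=
  (h P (τ P) hP.symm).1 rfl

theorem unique (h₁ : IsReverse τ τ₁) (h₂ : IsReverse τ τ₂) : τ₁ = τ₂ := by
  funext B
  by_cases hB₁ : τ₁ B = B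
  · by_cases hB₂ : τ₂ B = B
    · rw [hB₁, hB₂]
    · exact (h₁ (τ₂ B) B hB₂).1 (h₂.symm.apply_apply hB₂)
  · exact ((h₂ (τ₁ B) B hB₁).1 (h₁.symm.apply_apply hB₁)).symm

theorem unique_left (h₁ : IsReverse τ₁ τ) (h₂ : IsReverse τ₂ τ) : τ₁ = τ₂ :=
  h₁.symm.unique h₂.symm

end IsReverse

open Classical in
noncomputable def reverseOf (τ : S → S) : S → S :=
  if h : ∃ τ', IsReverse τ τ' then h.choose else τ

theorem reverseOf_eq {τ τ' : S → S} (h : IsReverse τ τ') : reverseOf τ = τ' := by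
  have hex : ∃ τ', IsReverse τ τ' := ⟨τ', h⟩
  rw [reverseOf, dif_pos hex]
  exact hex.choose_spec.unique h

theorem reverseOf_reverseOf {τ τ' : S → S} (h : IsReverse τ τ') : reverseOf (reverseOf τ) = τ := by
  rw [reverseOf_eq h, reverseOf_eq h.symm]

theorem mApply_cons (τ : S → S) (m : List (S → S)) (P : S) :
    mApply (τ :: m) P = mApply m (τ P) := rfl

theorem mApply_append (m n : List (S → S)) (P : S) :
    mApply (m ++ n) P = mApply n (mApply m P) := List.foldl_append

theorem stepwiseEff_append {m n : List (S → S)} {P : S} :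
    StepwiseEff (m ++ n) P ↔ StepwiseEff m P ∧ StepwiseEff n (mApply m P) := by
  induction m generalizing P with
  | nil => simp [StepwiseEff, mApply]
  | cons τ m ih => simp only [List.cons_append, StepwiseEff, ih, mApply_cons, and_assoc]

theorem StepwiseEff.reverse_map {ρ : (S → S) → S → S} {m : List (S → S)} {P : S}
    (hρ : ∀ τ ∈ m, IsReverse τ (ρ τ)) (h : StepwiseEff m P) :
    StepwiseEff (m.map ρ).reverse (mApply m P) ∧ mApply (m.map ρ).reverse (mApply m P) = P := by
  induction m generalizing P with
  | nil => exact ⟨trivial, rfl⟩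
  | cons τ m ih =>
    obtain ⟨hτP, hm⟩ := h
    obtain ⟨hrev, hrevP⟩ := ih (fun τ' hτ' => hρ τ' (List.mem_cons_of_mem τ hτ')) hm
    have hback : ρ τ (τ P) = P := (hρ τ List.mem_cons_self).apply_apply hτP
    rw [List.map_cons, List.reverse_cons, mApply_cons, stepwiseEff_append, mApply_append, hrevP]
    exact ⟨⟨hrev, hback.trans_ne hτP.symm, trivial⟩, hback⟩

theorem Vacuous.exists_isReverse_of_cons {τ : S → S} {m : List (S → S)} (hv : Vacuous (τ :: m)) :
    ∃ τ' ∈ m, IsReverse τ τ' := by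
  obtain ⟨σ, hσ, -, hrev⟩ := hv
  obtain ⟨j, hj⟩ := Fin.exists_succ_eq.2 (hσ 0)
  refine ⟨m.get j, List.get_mem m j, ?_⟩
  simpa [← hj] using hrev 0

open Classical in
theorem Vacuous.count_eq {u : List (S → S)} (hv : Vacuous u) {a b : S → S}
    (hab : IsReverse a b) : u.count a = u.count b := by
  obtain ⟨σ, -, hσσ, hrev⟩ := hv
  have hcount (c : S → S) : u.count c = (Finset.univ.filter fun i => u.get i = c).card :=
    (Fin.card_filter_univ_eq_vector_get_eq_count c ⟨u, rfl⟩).symm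
  rw [hcount, hcount]
  refine Finset.card_bij' (fun i _ => σ i) (fun i _ => σ i) ?_ ?_ (fun i _ => hσσ i)
    (fun i _ => hσσ i)
  · intro i hi
    simp only [Finset.mem_filter, Finset.mem_univ, true_and] at hi ⊢
    exact (hi ▸ hrev i).unique hab
  · intro i hi
    simp only [Finset.mem_filter, Finset.mem_univ, true_and] at hi ⊢
    exact (hi ▸ hrev i).unique hab.symm

theorem Cardinal.mk_le_mk_of_involution {α : Type*} {A B : Set α} (ρ : α → α)
    (hρ : ∀ x ∈ A, ρ (ρ x) = x) (hA : ∀ x ∈ A, ρ x ∉ A) (hAB : ∀ x ∈ A, x ∉ B → ρ x ∈ B) :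
    #A ≤ #B := by
  classical
  refine mk_le_of_injective
    (f := fun x : A => if hx : x.1 ∈ B then ⟨x, hx⟩ else ⟨ρ x, hAB x x.2 hx⟩) ?_
  rintro ⟨x, hxA⟩ ⟨y, hyA⟩ hxy
  simp only at hxy
  split_ifs at hxy with hx hy hy <;> rw [Subtype.mk.injEq] at hxy ⊢
  · exact hxy
  · exact absurd (hxy ▸ hxA) (hA y hyA)
  · exact absurd (hxy ▸ hyA) (hA x hxA)
  · rw [← hρ x hxA, ← hρ y hyA, hxy]

section Medium

variable {T : Set (S → S)}

theorem concise_nil (P : S) : Concise T [] P :=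
  ⟨fun _ h => absurd h List.not_mem_nil, fun _ h => absurd h List.not_mem_nil, trivial,
    List.nodup_nil⟩

theorem Concise.cons {τ : S → S} {m : List (S → S)} {P : S} (hm : Concise T m (τ P))
    (hτ : τ ∈ T) (hτP : τ P ≠ P) (hτm : τ ∉ m) (hself : ¬ IsReverse τ τ)
    (hrev : ∀ τ' ∈ m, ¬ IsReverse τ τ') : Concise T (τ :: m) P := by
  refine ⟨?_, ?_, ⟨hτP, hm.2.2.1⟩, List.nodup_cons.2 ⟨hτm, hm.2.2.2⟩⟩
  · intro x hx
    rcases List.mem_cons.1 hx with rfl | hx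
    exacts [hτ, hm.1 x hx]
  · intro x hx y hy hxy
    rcases List.mem_cons.1 hx with rfl | hxm <;> rcases List.mem_cons.1 hy with rfl | hym
    · exact hself hxy
    · exact hrev y hym hxy
    · exact hrev x hxm hxy.symm
    · exact hm.2.1 x hxm y hym hxy

theorem IsMedium.exists_concise (hM : IsMedium T) (P Q : S) :
    ∃ m, Concise T m P ∧ mApply m P = Q := by
  by_cases hPQ : P = Q
  · exact ⟨[], concise_nil P, hPQ⟩
  · exact hM.2.1 P Q hPQ

theorem IsMedium.exists_apply_ne (hM : IsMedium T) {τ : S → S} (hτ : τ ∈ T) : ∃ A, τ A ≠ A :=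
  Function.ne_iff.1 (hM.1.2.2 τ hτ)

theorem IsMedium.exists_isReverse_mem (hM : IsMedium T) {τ : S → S} (hτ : τ ∈ T) {A : S}
    (hA : τ A ≠ A) {m : List (S → S)} (hm : Concise T m (τ A)) (hmA : mApply m (τ A) = A) :
    ∃ τ' ∈ m, IsReverse τ τ' := by
  have hmsg : IsMsg T (τ :: m) := by
    intro x hx
    rcases List.mem_cons.1 hx with rfl | hx
    exacts [hτ, hm.1 x hx]
  exact (hM.2.2 (τ :: m) A hmsg ⟨⟨hA, hm.2.2.1⟩, hmA⟩).exists_isReverse_of_cons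

theorem IsMedium.exists_isReverse (hM : IsMedium T) {τ : S → S} (hτ : τ ∈ T) :
    ∃ τ' ∈ T, IsReverse τ τ' := by
  obtain ⟨A, hA⟩ := hM.exists_apply_ne hτ
  obtain ⟨m, hm, hmA⟩ := hM.exists_concise (τ A) A
  obtain ⟨τ', hτ'm, hττ'⟩ := hM.exists_isReverse_mem hτ hA hm hmA
  exact ⟨τ', hm.1 τ' hτ'm, hττ'⟩

theorem IsMedium.not_isReverse_self (hM : IsMedium T) {τ : S → S} (hτ : τ ∈ T) :
    ¬ IsReverse τ τ := by
  intro hself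
  obtain ⟨A, hA⟩ := hM.exists_apply_ne hτ
  obtain ⟨m, hm, hmA⟩ := hM.exists_concise (τ A) A
  obtain ⟨τ', hτ'm, hττ'⟩ := hM.exists_isReverse_mem hτ hA hm hmA
  obtain rfl := hself.unique hττ'
  exact hm.2.1 τ hτ'm τ hτ'm hself

theorem IsMedium.isReverse_reverseOf (hM : IsMedium T) {τ : S → S} (hτ : τ ∈ T) :
    IsReverse τ (reverseOf τ) := by
  obtain ⟨τ', -, hττ'⟩ := hM.exists_isReverse hτ
  exact reverseOf_eq hττ' ▸ hττ'

theorem IsMedium.reverseOf_mem (hM : IsMedium T) {τ : S → S} (hτ : τ ∈ T) :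
    reverseOf τ ∈ T := by
  obtain ⟨τ', hτ'T, hττ'⟩ := hM.exists_isReverse hτ
  exact reverseOf_eq hττ' ▸ hτ'T

theorem sContent_subset (P : S) : SContent T P ⊆ T := by
  rintro τ ⟨_, m, hm, -, hτm⟩
  exact hm.1 τ hτm

theorem IsMedium.mem_sContent_apply (hM : IsMedium T) {τ : S → S} (hτ : τ ∈ T) {A : S}
    (hA : τ A ≠ A) : τ ∈ SContent T (τ A) :=
  ⟨A, [τ], (concise_nil (τ A)).cons hτ hA List.not_mem_nil (hM.not_isReverse_self hτ)
    (fun _ h => absurd h List.not_mem_nil), rfl, List.mem_singleton_self τ⟩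

theorem IsMedium.mem_sContent_or (hM : IsMedium T) {τ τ' : S → S} (hτ : τ ∈ T)
    (hττ' : IsReverse τ τ') (X : S) : τ ∈ SContent T X ∨ τ' ∈ SContent T X := by
  obtain ⟨A, hA⟩ := hM.exists_apply_ne hτ
  obtain ⟨m, hm, hmX⟩ := hM.exists_concise (τ A) X
  by_cases hτ'm : τ' ∈ m
  · exact Or.inr ⟨τ A, m, hm, hmX, hτ'm⟩
  by_cases hτm : τ ∈ m
  · exact Or.inl ⟨τ A, m, hm, hmX, hτm⟩
  have hcons : Concise T (τ :: m) A := hm.cons hτ hA hτm (hM.not_isReverse_self hτ)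
    fun σ hσ hτσ => hτ'm (hττ'.unique hτσ ▸ hσ)
  exact Or.inl ⟨A, τ :: m, hcons, hmX, List.mem_cons_self⟩

open Classical in
theorem IsMedium.notMem_sContent_of_isReverse (hM : IsMedium T) {a b : S → S}
    (hab : IsReverse a b) {X : S} (ha : a ∈ SContent T X) : b ∉ SContent T X := by
  rintro ⟨W, p, hp, hpX, hbp⟩
  obtain ⟨V, n, hn, hnX, han⟩ := ha
  obtain ⟨q, hq, hqV⟩ := hM.exists_concise W V
  have hρ : ∀ τ ∈ p, IsReverse τ (reverseOf τ) := fun τ hτ => hM.isReverse_reverseOf (hp.1 τ hτ)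
  set r := (p.map reverseOf).reverse
  obtain ⟨hr, hrW⟩ := StepwiseEff.reverse_map hρ hp.2.2.1
  rw [hpX] at hr hrW
  have hrT : IsMsg T r := by
    intro x hx
    obtain ⟨τ, hτ, rfl⟩ := List.mem_map.1 (List.mem_reverse.1 hx)
    exact hM.reverseOf_mem (hp.1 τ hτ)
  have har : a ∈ r := List.mem_reverse.2 (List.mem_map.2 ⟨b, hbp, reverseOf_eq hab.symm⟩)
  have hbr : b ∉ r := by
    intro hb
    obtain ⟨τ, hτ, hτb⟩ := List.mem_map.1 (List.mem_reverse.1 hb)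
    have hτa : τ = a := (hτb ▸ hρ τ hτ).unique_left hab
    exact hp.2.1 a (hτa ▸ hτ) b hbp hab
  have hbn : b ∉ n := fun hb => hn.2.1 a han b hb hab
  have hmsg : IsMsg T (n ++ r ++ q) := by
    simp only [IsMsg, List.mem_append]
    rintro x ((hx | hx) | hx)
    exacts [hn.1 x hx, hrT x hx, hq.1 x hx]
  have hret : IsReturn (n ++ r ++ q) V := by
    refine ⟨?_, by rw [mApply_append, mApply_append, hnX, hrW, hqV]⟩
    rw [stepwiseEff_append, stepwiseEff_append, mApply_append, hnX, hrW]
    exact ⟨⟨hn.2.2.1, hr⟩, hq.2.2.1⟩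
  have hcount := (hM.2.2 _ V hmsg hret).count_eq hab
  have hqb : q.count b ≤ 1 := List.nodup_iff_count_le_one.1 hq.2.2.2 b
  simp only [List.count_append, List.count_eq_zero.2 hbn, List.count_eq_zero.2 hbr] at hcount
  have hna : 0 < n.count a := List.count_pos_iff.2 han
  have hra : 0 < r.count a := List.count_pos_iff.2 har
  omega

theorem IsMedium.reverseOf_mem_sContent_iff (hM : IsMedium T) {τ : S → S} (hτ : τ ∈ T) (X : S) :
    reverseOf τ ∈ SContent T X ↔ τ ∉ SContent T X :=
  ⟨fun hρX hτX => hM.notMem_sContent_of_isReverse (hM.isReverse_reverseOf hτ) hτX hρX,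
    (hM.mem_sContent_or hτ (hM.isReverse_reverseOf hτ) X).resolve_left⟩

theorem IsMedium.mk_sContent_le (hM : IsMedium T) (P Q : S) :
    #(SContent T P) ≤ #(SContent T Q) :=
  mk_le_mk_of_involution reverseOf
    (fun _ hτ => reverseOf_reverseOf (hM.isReverse_reverseOf (sContent_subset P hτ)))
    (fun _ hτ hρτ => (hM.reverseOf_mem_sContent_iff (sContent_subset P hτ) P).1 hρτ hτ)
    (fun _ hτ => (hM.reverseOf_mem_sContent_iff (sContent_subset P hτ) Q).2)

theorem IsMedium.sContent_injective (hM : IsMedium T) : Function.Injective (SContent T) := by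
  intro P Q hPQ
  by_contra hne
  obtain ⟨_ | ⟨τ, m⟩, hm, hmQ⟩ := hM.2.1 P Q hne
  · exact hne hmQ
  have hτ : τ ∈ T := hm.1 τ List.mem_cons_self
  have hτP : τ P ≠ P := hm.2.2.1.1
  have hτQ : τ ∈ SContent T Q := ⟨P, τ :: m, hm, hmQ, List.mem_cons_self⟩
  have hback : reverseOf τ (τ P) = P := (hM.isReverse_reverseOf hτ).apply_apply hτP
  have hρP : reverseOf τ ∈ SContent T P :=
    hback ▸ hM.mem_sContent_apply (hM.reverseOf_mem hτ) (hback.trans_ne hτP.symm)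
  exact (hM.reverseOf_mem_sContent_iff hτ Q).1 (hPQ ▸ hρP) hτQ

end Medium

/-- In a medium, the token contents of any two states have the same cardinality,
and the contents of two states are equal iff the states are equal. -/
theorem stmt7 {T : Set (S → S)} (hM : IsMedium T) (P Q : S) :
    Cardinal.mk (SContent T P) = Cardinal.mk (SContent T Q) ∧
    (SContent T P = SContent T Q ↔ P = Q) :=
  ⟨le_antisymm (hM.mk_sContent_le P Q) (hM.mk_sContent_le Q P), hM.sContent_injective.eq_iff⟩
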